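/- For every connected graph G, γ_cg'(G) ≤ 2γ_cg(G), where γ_cg' denotes the Staller-start game connected domination number. -/

import Mathlib

open Finset

namespace ConnDomGame

variable {V : Type*} [Fintype V] [DecidableEq V]

/-- The closed neighborhood of a finite set of vertices. -/
def nbhd (G : SimpleGraph V) [DecidableRel G.Adj] (D : Finset V) : Finset V :=
  univ.filter fun u => u ∈ D ∨ ∃ v ∈ D, G.Adj u v

/-- The legal moves in the connected domination game on `G` with predominated set `S`,
from the position where the set of played vertices is `D`: a legal move must dominate
a not-yet-dominated vertex and (except for the first move) be adjacent to a played vertex. -/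
def legalMoves (G : SimpleGraph V) [DecidableRel G.Adj] (S D : Finset V) : Finset V :=
  univ.filter fun v =>
    ¬ (nbhd G {v} ⊆ S ∪ nbhd G D) ∧ (D = ∅ ∨ ∃ u ∈ D, G.Adj v u)

/-- Optimal number of further moves in the connected domination game on `G` with
predominated set `S`, from the position with played set `D`; `turn = true` means
Dominator (the minimizer) is to move.  The value is `⊤` if the player to move can
force the game to get stuck with an undominated vertex remaining.  The fuel
argument `n` is sufficient whenever `n + D.card ≥ Fintype.card V`. -/
noncomputable def val (G : SimpleGraph V) [DecidableRel G.Adj] (S : Finset V) :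
    Bool → ℕ → Finset V → ℕ∞
  | _, 0, D => if univ ⊆ S ∪ nbhd G D then 0 else ⊤
  | turn, n + 1, D =>
    if h : (legalMoves G S D).Nonempty then
      if turn then
        1 + (legalMoves G S D).inf' h fun v => val G S false n (insert v D)
      else
        1 + (legalMoves G S D).sup' h fun v => val G S true n (insert v D)
    else if univ ⊆ S ∪ nbhd G D then 0 else ⊤

/-- The Dominator-start game connected domination number of `G` with the vertices of `S`
predominated (`γ_cg(G|S)`; for `S = ∅` this is `γ_cg(G)`). -/
noncomputable def gammaCG (G : SimpleGraph V) [DecidableRel G.Adj] (S : Finset V) : ℕ∞ :=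
  val G S true (Fintype.card V) ∅

/-- The Staller-start game connected domination number of `G` with `S` predominated. -/
noncomputable def gammaCG' (G : SimpleGraph V) [DecidableRel G.Adj] (S : Finset V) : ℕ∞ :=
  val G S false (Fintype.card V) ∅

/-- The connected domination number of `G` with the set `S` predominated:
minimum size of a set `D` inducing a connected subgraph and dominating all
vertices outside `S`. -/
noncomputable def gammaC (G : SimpleGraph V) (S : Finset V) : ℕ :=
  sInf {k | ∃ D : Finset V, D.card = k ∧ (G.induce (D : Set V)).Connected ∧
    ∀ u, u ∈ S ∨ u ∈ D ∨ ∃ v ∈ D, G.Adj u v}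

/-- `l` is a legal sequence of first moves of the connected domination game on `G`
with predominated set `S`. -/
def LegalSeq (G : SimpleGraph V) [DecidableRel G.Adj] (S : Finset V) (l : List V) : Prop :=
  ∀ i (h : i < l.length), l.get ⟨i, h⟩ ∈ legalMoves G S (l.take i).toFinset


section Lemmas

variable {G : SimpleGraph V} [DecidableRel G.Adj]

lemma mem_nbhd {D : Finset V} {u : V} : u ∈ nbhd G D ↔ u ∈ D ∨ ∃ v ∈ D, G.Adj u v := by
  simp [nbhd]

lemma mem_nbhd_of_mem {D : Finset V} {u : V} (h : u ∈ D) : u ∈ nbhd G D :=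
  mem_nbhd.2 (Or.inl h)

lemma nbhd_mono {D D' : Finset V} (h : D ⊆ D') : nbhd G D ⊆ nbhd G D' := by
  intro u hu
  rcases mem_nbhd.1 hu with h1 | ⟨v, hv, ha⟩
  · exact mem_nbhd.2 (Or.inl (h h1))
  · exact mem_nbhd.2 (Or.inr ⟨v, h hv, ha⟩)

lemma nbhd_empty : nbhd G (∅ : Finset V) = ∅ := by
  ext u; simp [nbhd]

lemma mem_legal {D : Finset V} {v : V} :
    v ∈ legalMoves G ∅ D ↔ ¬ nbhd G {v} ⊆ nbhd G D ∧ (D = ∅ ∨ ∃ u ∈ D, G.Adj v u) := by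
  simp [legalMoves]

lemma not_mem_of_legal {D : Finset V} {v : V} (h : v ∈ legalMoves G ∅ D) : v ∉ D := by
  intro hv
  exact (mem_legal.1 h).1 (nbhd_mono (singleton_subset_iff.2 hv))

lemma legal_empty_of_dominated {D : Finset V} (h : univ ⊆ nbhd G D) :
    legalMoves G ∅ D = ∅ := by
  rw [eq_empty_iff_forall_notMem]
  intro v hv
  exact (mem_legal.1 hv).1 (fun u _ => h (mem_univ u))

lemma val_zero (S D : Finset V) (t : Bool) :
    val G S t 0 D = if univ ⊆ S ∪ nbhd G D then 0 else ⊤ := rfl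

lemma val_succ_true (S D : Finset V) (n : ℕ) :
    val G S true (n + 1) D =
      if h : (legalMoves G S D).Nonempty then
        1 + (legalMoves G S D).inf' h fun v => val G S false n (insert v D)
      else if univ ⊆ S ∪ nbhd G D then 0 else ⊤ := rfl

lemma val_succ_false (S D : Finset V) (n : ℕ) :
    val G S false (n + 1) D =
      if h : (legalMoves G S D).Nonempty then
        1 + (legalMoves G S D).sup' h fun v => val G S true n (insert v D)
      else if univ ⊆ S ∪ nbhd G D then 0 else ⊤ := rfl

lemma val_of_dominated {D : Finset V} (h : univ ⊆ nbhd G D) (t : Bool) (n : ℕ) :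
    val G ∅ t n D = 0 := by
  have h' : univ ⊆ ∅ ∪ nbhd G D := by simpa using h
  cases n with
  | zero => rw [val_zero, if_pos h']
  | succ n =>
    have hleg : ¬ (legalMoves G ∅ D).Nonempty := by
      rw [legal_empty_of_dominated h]; simp
    cases t
    · rw [val_succ_false, dif_neg hleg, if_pos h']
    · rw [val_succ_true, dif_neg hleg, if_pos h']

lemma singleton_conn (v : V) : (G.induce ({v} : Set V)).Connected := by
  rw [SimpleGraph.connected_iff]
  refine ⟨fun a b => ?_, ⟨⟨v, rfl⟩⟩⟩
  have ha : (a : V) = v := a.2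
  have hb : (b : V) = v := b.2
  have : a = b := Subtype.ext (ha.trans hb.symm)
  rw [this]

lemma insert_conn {D : Finset V} {v : V} (hD : D = ∅ ∨ (G.induce (D : Set V)).Connected)
    (hleg : D = ∅ ∨ ∃ u ∈ D, G.Adj v u) :
    (G.induce (↑(insert v D) : Set V)).Connected := by
  rcases hD with rfl | hD
  · have h0 : (↑(insert v (∅ : Finset V)) : Set V) = {v} := by simp
    rw [h0]
    exact singleton_conn v
  · rcases hleg with rfl | ⟨u, hu, ha⟩
    · exact hD.nonempty.elim fun x => absurd x.2 (by simp)
    · have hins : (↑(insert v D) : Set V) = {v} ∪ ↑D := by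
        rw [Finset.coe_insert, Set.insert_eq]
      rw [hins]
      exact SimpleGraph.connected_induce_union (singleton_conn v).preconnected hD.preconnected rfl hu ha

lemma univ_conn (hG : G.Connected) :
    (G.induce (↑(univ : Finset V) : Set V)).Connected := by
  rw [coe_univ]
  exact (SimpleGraph.induceUnivIso G).connected_iff.2 hG

/-- Part 1: from any legal position there is a connected dominating set of size
at most `|D| +` the game value. -/
lemma exists_witness (hG : G.Connected) :
    ∀ (n : ℕ) (t : Bool) (D : Finset V), (D = ∅ ∨ (G.induce (D : Set V)).Connected) →
    ∃ C : Finset V, (G.induce (C : Set V)).Connected ∧ univ ⊆ nbhd G C ∧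
      (C.card : ℕ∞) ≤ D.card + val G ∅ t n D := by
  have hne : Nonempty V := hG.nonempty
  have hU : ∀ (D : Finset V), ¬ univ ⊆ ∅ ∪ nbhd G D →
      ∃ C : Finset V, (G.induce (C : Set V)).Connected ∧ univ ⊆ nbhd G C ∧
      (C.card : ℕ∞) ≤ D.card + (if univ ⊆ ∅ ∪ nbhd G D then (0:ℕ∞) else ⊤) := by
    intro D hdom
    exact ⟨univ, univ_conn hG, fun u _ => mem_nbhd_of_mem (mem_univ u),
      by rw [if_neg hdom, add_top]; exact le_top⟩
  have hDom : ∀ (D : Finset V), (D = ∅ ∨ (G.induce (D : Set V)).Connected) →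
      univ ⊆ ∅ ∪ nbhd G D →
      ∃ C : Finset V, (G.induce (C : Set V)).Connected ∧ univ ⊆ nbhd G C ∧
      (C.card : ℕ∞) ≤ D.card + (if univ ⊆ ∅ ∪ nbhd G D then (0:ℕ∞) else ⊤) := by
    intro D hD hdom
    rcases hD with rfl | hD
    · exfalso
      obtain ⟨v⟩ := hne
      have := hdom (mem_univ v)
      rw [nbhd_empty] at this
      simpa using this
    · exact ⟨D, hD, by simpa using hdom, by rw [if_pos hdom, add_zero]⟩
  intro n
  induction n with
  | zero =>
    intro t D hD
    rw [val_zero]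
    by_cases hdom : univ ⊆ ∅ ∪ nbhd G D
    · exact hDom D hD hdom
    · exact hU D hdom
  | succ n ih =>
    intro t D hD
    by_cases h : (legalMoves G ∅ D).Nonempty
    · cases t
      · -- Staller to move: sup'
        rw [val_succ_false, dif_pos h]
        obtain ⟨v, hv⟩ := h
        have hvD : v ∉ D := not_mem_of_legal hv
        have hconn := insert_conn hD (mem_legal.1 hv).2
        obtain ⟨C, hC1, hC2, hC3⟩ := ih true (insert v D) (Or.inr hconn)
        refine ⟨C, hC1, hC2, ?_⟩
        calc (C.card : ℕ∞) ≤ (insert v D).card + val G ∅ true n (insert v D) := hC3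
          _ ≤ (insert v D).card + (legalMoves G ∅ D).sup'
              ⟨v, hv⟩ (fun v => val G ∅ true n (insert v D)) :=
            add_le_add_right (Finset.le_sup' (fun v => val G ∅ true n (insert v D)) hv) _
          _ = D.card + (1 + (legalMoves G ∅ D).sup'
              ⟨v, hv⟩ (fun v => val G ∅ true n (insert v D))) := by
            rw [card_insert_of_notMem hvD]
            push_cast
            ring
      · -- Dominator to move: inf'
        rw [val_succ_true, dif_pos h]
        obtain ⟨v, hv, hvmin⟩ := Finset.exists_mem_eq_inf' h
          (fun v => val G ∅ false n (insert v D))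
        have hvD : v ∉ D := not_mem_of_legal hv
        have hconn := insert_conn hD (mem_legal.1 hv).2
        obtain ⟨C, hC1, hC2, hC3⟩ := ih false (insert v D) (Or.inr hconn)
        refine ⟨C, hC1, hC2, ?_⟩
        rw [hvmin]
        calc (C.card : ℕ∞) ≤ (insert v D).card + val G ∅ false n (insert v D) := hC3
          _ = D.card + (1 + val G ∅ false n (insert v D)) := by
            rw [card_insert_of_notMem hvD]
            push_cast
            ring
    · cases t
      · rw [val_succ_false, dif_neg h]
        by_cases hdom : univ ⊆ ∅ ∪ nbhd G D
        · exact hDom D hD hdom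
        · exact hU D hdom
      · rw [val_succ_true, dif_neg h]
        by_cases hdom : univ ⊆ ∅ ∪ nbhd G D
        · exact hDom D hD hdom
        · exact hU D hdom

lemma cross {s : Set V} {P : V → Prop} :
    ∀ {x y : s} (_ : (G.induce s).Walk x y), P x → ¬ P y →
    ∃ a b : s, G.Adj (a : V) (b : V) ∧ P a ∧ ¬ P b := by
  intro x y w
  induction w with
  | nil => exact fun h h' => absurd h h'
  | @cons u m y h p ih =>
    intro hu hy
    by_cases hm : P m
    · exact ih hm hy
    · exact ⟨u, m, h, hu, hm⟩

/-- Key existence lemma for Dominator's strategy: if some vertex is undominated,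
Dominator has a legal move inside `C \ D`. -/
lemma exists_good {C D : Finset V} (hC : (G.induce (C : Set V)).Connected)
    (hCd : univ ⊆ nbhd G C) (hD : D.Nonempty) {u : V} (hu : u ∉ nbhd G D) :
    ∃ c, c ∈ C ∧ c ∉ D ∧ c ∈ legalMoves G ∅ D := by
  -- a vertex of C in the closed neighborhood of D
  obtain ⟨d, hd⟩ := hD
  have hc₀ : ∃ c₀, c₀ ∈ C ∧ c₀ ∈ nbhd G D := by
    rcases mem_nbhd.1 (hCd (mem_univ d)) with h1 | ⟨c, hc, ha⟩
    · exact ⟨d, h1, mem_nbhd_of_mem hd⟩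
    · exact ⟨c, hc, mem_nbhd.2 (Or.inr ⟨d, hd, ha.symm⟩)⟩
  -- from an adjacent pair in C crossing the dominated frontier, build a legal move
  have key : ∀ a b : V, a ∈ C → G.Adj b a → a ∈ nbhd G D → b ∉ nbhd G D →
      ∃ c, c ∈ C ∧ c ∉ D ∧ c ∈ legalMoves G ∅ D := by
    intro a b haC hab haD hbD
    have haD' : a ∉ D := fun h => hbD (mem_nbhd.2 (Or.inr ⟨a, h, hab⟩))
    have hadj : ∃ v ∈ D, G.Adj a v := by
      rcases mem_nbhd.1 haD with h1 | h2
      · exact absurd h1 haD'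
      · exact h2
    refine ⟨a, haC, haD', mem_legal.2 ⟨fun hsub => hbD (hsub ?_), Or.inr hadj⟩⟩
    exact mem_nbhd.2 (Or.inr ⟨a, mem_singleton_self a, hab⟩)
  -- find a vertex of C outside N[D], or win directly
  rcases mem_nbhd.1 (hCd (mem_univ u)) with h1 | ⟨c, hc, ha⟩
  · obtain ⟨c₀, hc₀C, hc₀D⟩ := hc₀
    have huD : u ∉ nbhd G D := hu
    have hr := hC.preconnected ⟨c₀, by simpa using hc₀C⟩ ⟨u, by simpa using h1⟩
    obtain ⟨w⟩ := hr
    obtain ⟨a, b, hab, haD, hbD⟩ := cross (P := fun x => x ∈ nbhd G D) w hc₀D huD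
    have haC : (a : V) ∈ C := by simpa using a.2
    exact key a b haC hab.symm haD hbD
  · by_cases hcD : c ∈ nbhd G D
    · exact key c u hc ha hcD hu
    · -- walk from c₀ to c in C
      obtain ⟨c₀, hc₀C, hc₀D⟩ := hc₀
      have hr := hC.preconnected ⟨c₀, by simpa using hc₀C⟩ ⟨c, by simpa using hc⟩
      obtain ⟨w⟩ := hr
      obtain ⟨a, b, hab, haD, hbD⟩ := cross (P := fun x => x ∈ nbhd G D) w hc₀D hcD
      have haC : (a : V) ∈ C := by simpa using a.2
      exact key a b haC hab.symm haD hbD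

lemma full_of_card_le {D : Finset V} (h : Fintype.card V ≤ D.card) :
    univ ⊆ nbhd G D := by
  have : D = univ := D.eq_univ_of_card (le_antisymm (card_le_univ D) h)
  subst this
  exact fun u _ => mem_nbhd_of_mem (mem_univ u)

lemma sdiff_nonempty_of_undominated {C D : Finset V} (hCd : univ ⊆ nbhd G C)
    {u : V} (hu : u ∉ nbhd G D) : (C \ D).Nonempty := by
  rcases mem_nbhd.1 (hCd (mem_univ u)) with h1 | ⟨c, hc, ha⟩
  · exact ⟨u, mem_sdiff.2 ⟨h1, fun h => hu (mem_nbhd_of_mem h)⟩⟩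
  · exact ⟨c, mem_sdiff.2 ⟨hc, fun h => hu (mem_nbhd.2 (Or.inr ⟨c, h, ha⟩))⟩⟩

/-- Part 2: Dominator's strategy in the Staller-start game, playing along a
connected dominating set `C`, finishes the game within `2|C \ D|` further moves. -/
lemma strategy (hV : Nonempty V) {C : Finset V} (hC : (G.induce (C : Set V)).Connected)
    (hCd : univ ⊆ nbhd G C) :
    ∀ n : ℕ,
      (∀ D : Finset V, D.Nonempty → Fintype.card V ≤ D.card + n → (C \ D).Nonempty →
        val G ∅ true n D + 1 ≤ 2 * ((C \ D).card : ℕ∞)) ∧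
      (∀ D : Finset V, Fintype.card V ≤ D.card + n →
        val G ∅ false n D ≤ 2 * ((C \ D).card : ℕ∞)) := by
  have hdom' : ∀ {D : Finset V}, C ⊆ D → univ ⊆ nbhd G D :=
    fun hsub => fun u hu => nbhd_mono hsub (hCd hu)
  intro n
  induction n with
  | zero =>
    constructor
    · intro D hD hfuel hm
      have h0 : univ ⊆ nbhd G D := full_of_card_le (by simpa using hfuel)
      rw [val_of_dominated h0, zero_add]
      obtain ⟨x, hx⟩ := hm
      calc (1 : ℕ∞) ≤ 2 * 1 := by norm_num
        _ ≤ 2 * ((C \ D).card : ℕ∞) := by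
          have : 1 ≤ (C \ D).card := card_pos.2 ⟨x, hx⟩
          exact mul_le_mul_right (by exact_mod_cast this) 2
    · intro D hfuel
      have h0 : univ ⊆ nbhd G D := full_of_card_le (by simpa using hfuel)
      rw [val_of_dominated h0]
      exact zero_le
  | succ n ih =>
    constructor
    · -- Dominator to move
      intro D hD hfuel hm
      by_cases hdom : univ ⊆ nbhd G D
      · rw [val_of_dominated hdom, zero_add]
        obtain ⟨x, hx⟩ := hm
        calc (1 : ℕ∞) ≤ 2 * 1 := by norm_num
          _ ≤ 2 * ((C \ D).card : ℕ∞) := by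
            have : 1 ≤ (C \ D).card := card_pos.2 ⟨x, hx⟩
            exact mul_le_mul_right (by exact_mod_cast this) 2
      · obtain ⟨u, hu⟩ : ∃ u, u ∉ nbhd G D := by
          by_contra hcon
          push_neg at hcon
          exact hdom fun u _ => hcon u
        obtain ⟨c, hcC, hcD, hcleg⟩ := exists_good hC hCd hD hu
        have hne : (legalMoves G ∅ D).Nonempty := ⟨c, hcleg⟩
        rw [val_succ_true, dif_pos hne]
        have hcCD : c ∈ C \ D := mem_sdiff.2 ⟨hcC, hcD⟩
        set m' := (C \ insert c D).card with hm'
        have hcard : (C \ D).card = m' + 1 := by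
          rw [hm', sdiff_insert, card_erase_of_mem hcCD]
          have : 1 ≤ (C \ D).card := card_pos.2 ⟨c, hcCD⟩
          omega
        have hB := ih.2 (insert c D) (by
          rw [card_insert_of_notMem hcD]; omega)
        calc (1 + (legalMoves G ∅ D).inf' hne fun v => val G ∅ false n (insert v D)) + 1
            ≤ (1 + val G ∅ false n (insert c D)) + 1 := by
              gcongr
              exact Finset.inf'_le _ hcleg
          _ ≤ (1 + 2 * (m' : ℕ∞)) + 1 := by gcongr
          _ = 2 * ((m' + 1 : ℕ) : ℕ∞) := by push_cast; ring
          _ = 2 * ((C \ D).card : ℕ∞) := by rw [← hcard]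
    · -- Staller to move
      intro D hfuel
      by_cases hdom : univ ⊆ nbhd G D
      · rw [val_of_dominated hdom]
        exact zero_le
      · obtain ⟨u, hu⟩ : ∃ u, u ∉ nbhd G D := by
          by_contra hcon
          push_neg at hcon
          exact hdom fun u _ => hcon u
        have hm : (C \ D).Nonempty := sdiff_nonempty_of_undominated hCd hu
        have hm1 : (1 : ℕ∞) ≤ 2 * ((C \ D).card : ℕ∞) := by
          have : 1 ≤ (C \ D).card := card_pos.2 hm
          calc (1 : ℕ∞) ≤ 2 * 1 := by norm_num
            _ ≤ _ := mul_le_mul_right (by exact_mod_cast this) 2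
        have hne : (legalMoves G ∅ D).Nonempty := by
          rcases D.eq_empty_or_nonempty with rfl | hDne
          · obtain ⟨v⟩ := hV
            refine ⟨v, mem_legal.2 ⟨fun hsub => ?_, Or.inl rfl⟩⟩
            have : v ∈ nbhd G {v} := mem_nbhd_of_mem (mem_singleton_self v)
            have := hsub this
            rw [nbhd_empty] at this
            simpa using this
          · obtain ⟨c, _, _, hcleg⟩ := exists_good hC hCd hDne hu
            exact ⟨c, hcleg⟩
        rw [val_succ_false, dif_pos hne]
        have hsup : ((legalMoves G ∅ D).sup' hne fun v => val G ∅ true n (insert v D))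
            ≤ 2 * ((C \ D).card : ℕ∞) - 1 := by
          refine Finset.sup'_le _ _ fun s hs => ?_
          have hsD : s ∉ D := not_mem_of_legal hs
          have hfuel' : Fintype.card V ≤ (insert s D).card + n := by
            rw [card_insert_of_notMem hsD]; omega
          have hmono : (C \ insert s D) ⊆ (C \ D) :=
            sdiff_subset_sdiff (Finset.Subset.refl C) (subset_insert s D)
          rcases (C \ insert s D).eq_empty_or_nonempty with hemp | hnemp
          · have hsubC : C ⊆ insert s D := by
              intro x hx
              by_contra hxn
              exact absurd (mem_sdiff.2 ⟨hx, hxn⟩) (by rw [hemp]; exact notMem_empty x)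
            rw [val_of_dominated (hdom' hsubC)]
            exact zero_le
          · have hA := ih.1 (insert s D) ⟨s, mem_insert_self s D⟩ hfuel' hnemp
            have : val G ∅ true n (insert s D) + 1 ≤ 2 * ((C \ D).card : ℕ∞) := by
              refine hA.trans ?_
              have := card_le_card hmono
              exact mul_le_mul_right (by exact_mod_cast this) 2
            exact (ENat.addLECancellable_of_ne_top (by simp)).le_tsub_of_add_le_right this
        calc 1 + ((legalMoves G ∅ D).sup' hne fun v => val G ∅ true n (insert v D))
            ≤ 1 + (2 * ((C \ D).card : ℕ∞) - 1) := add_le_add_right hsup 1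
          _ = 2 * ((C \ D).card : ℕ∞) := add_tsub_cancel_of_le hm1

end Lemmas
end ConnDomGame

open ConnDomGame in
/-- For every connected graph `G`, `γ_cg'(G) ≤ 2 γ_cg(G)`. -/
theorem gammaCG'_le_two_mul_gammaCG {V : Type*} [Fintype V] [DecidableEq V]
    (G : SimpleGraph V) [DecidableRel G.Adj] (hG : G.Connected) :
    gammaCG' G ∅ ≤ 2 * gammaCG G ∅ := by
  obtain ⟨C, hC1, hC2, hC3⟩ := exists_witness hG (Fintype.card V) true ∅ (Or.inl rfl)
  have h2 := (strategy hG.nonempty hC1 hC2 (Fintype.card V)).2 ∅ (by simp)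
  have hcc : (C.card : ℕ∞) ≤ gammaCG G ∅ := by
    simpa [gammaCG] using hC3
  calc gammaCG' G ∅ ≤ 2 * (C.card : ℕ∞) := by simpa [gammaCG'] using h2
    _ ≤ 2 * gammaCG G ∅ := mul_le_mul_right hcc 2
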